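/- The LOS probability ℙ_L(r) = ∏_{n=0}^{max(0,d-1)} (1 - exp(-(γ - (n+1/2)γ/d)²/(2κ²))) with d = ⌊r√(βδ)⌋ is nonincreasing in d (and hence nonincreasing in r) for fixed γ, κ > 0, and takes values in [0,1]. -/
import Mathlib


open Real

/-- The LOS probability
`ℙ_L = ∏_{n=0}^{d-1} (1 - exp (-(γ - (n+1/2)γ/d)²/(2κ²)))` (empty product `= 1` for
`d = 0`) is nonincreasing in `d = ⌊r√(βδ)⌋` for fixed `γ, κ > 0`, and takes values in
`[0, 1]`. -/
theorem stmt_12 (γ κ : ℝ) (hγ : 0 < γ) (hκ : 0 < κ) (P : ℕ → ℝ)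
    (hP : ∀ d : ℕ, P d = if d = 0 then 1 else
      ∏ n ∈ Finset.range d,
        (1 - Real.exp (-(γ - ((n : ℝ) + 1 / 2) * γ / d) ^ 2 / (2 * κ ^ 2)))) :
    Antitone P ∧ ∀ d, P d ∈ Set.Icc (0 : ℝ) 1 := by
  have hκ2 : (0:ℝ) < 2 * κ ^ 2 := by positivity
  have h01 : ∀ x : ℝ, 0 ≤ 1 - Real.exp (-x ^ 2 / (2 * κ ^ 2)) ∧
      1 - Real.exp (-x ^ 2 / (2 * κ ^ 2)) ≤ 1 := by
    intro x
    constructor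
    · have h1 : Real.exp (-x ^ 2 / (2 * κ ^ 2)) ≤ 1 := by
        rw [Real.exp_le_one_iff]
        exact div_nonpos_of_nonpos_of_nonneg (neg_nonpos.mpr (sq_nonneg x)) hκ2.le
      linarith
    · have := Real.exp_pos (-x ^ 2 / (2 * κ ^ 2)); linarith
  have hmono : ∀ a b : ℝ, 0 ≤ a → a ≤ b →
      1 - Real.exp (-a ^ 2 / (2 * κ ^ 2)) ≤ 1 - Real.exp (-b ^ 2 / (2 * κ ^ 2)) := by
    intro a b ha hab
    have h2 : a ^ 2 ≤ b ^ 2 := pow_le_pow_left₀ ha hab 2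
    have : Real.exp (-b ^ 2 / (2 * κ ^ 2)) ≤ Real.exp (-a ^ 2 / (2 * κ ^ 2)) := by
      exact Real.exp_le_exp.mpr (div_le_div_of_nonneg_right (neg_le_neg h2) hκ2.le)
    linarith
  have hmem : ∀ d, P d ∈ Set.Icc (0:ℝ) 1 := by
    intro d
    rw [hP]
    split
    · exact ⟨zero_le_one, le_refl 1⟩
    · exact ⟨Finset.prod_nonneg fun n _ => (h01 _).1,
        Finset.prod_le_one (fun n _ => (h01 _).1) (fun n _ => (h01 _).2)⟩
  have hstep : ∀ d, P (d + 1) ≤ P d := by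
    intro d
    rcases Nat.eq_zero_or_pos d with hd | hd
    · subst hd
      rw [hP 0]
      simpa using (hmem 1).2
    · have hd' : (0:ℝ) < (d:ℝ) := by exact_mod_cast hd
      rw [hP (d+1), hP d, if_neg (Nat.succ_ne_zero d), if_neg hd.ne']
      rw [Finset.prod_range_succ']
      simp only [Nat.cast_zero]
      have hle : ∀ n ∈ Finset.range d,
          1 - Real.exp (-(γ - ((↑(n+1) : ℝ) + 1 / 2) * γ / (↑(d+1) : ℝ)) ^ 2 / (2 * κ ^ 2)) ≤
          1 - Real.exp (-(γ - ((n : ℝ) + 1 / 2) * γ / (d : ℝ)) ^ 2 / (2 * κ ^ 2)) := by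
        intro n hn
        have hn' : (n:ℝ) + 1 ≤ (d:ℝ) := by
          exact_mod_cast Nat.succ_le_of_lt (Finset.mem_range.mp hn)
        push_cast
        apply hmono
        · rw [sub_nonneg, div_le_iff₀ (by linarith : (0:ℝ) < (d:ℝ) + 1)]
          nlinarith
        · have hY : ((n : ℝ) + 1 / 2) * γ / (d : ℝ) ≤ ((n : ℝ) + 1 + 1 / 2) * γ / ((d : ℝ) + 1) := by
            rw [div_le_div_iff₀ hd' (by linarith)]
            nlinarith
          linarith
      calc (∏ n ∈ Finset.range d,
            (1 - Real.exp (-(γ - ((↑(n+1) : ℝ) + 1 / 2) * γ / (↑(d+1) : ℝ)) ^ 2 / (2 * κ ^ 2)))) *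
            (1 - Real.exp (-(γ - ((0 : ℝ) + 1 / 2) * γ / (↑(d+1) : ℝ)) ^ 2 / (2 * κ ^ 2)))
          ≤ (∏ n ∈ Finset.range d,
            (1 - Real.exp (-(γ - ((n : ℝ) + 1 / 2) * γ / (d : ℝ)) ^ 2 / (2 * κ ^ 2)))) * 1 := by
            apply mul_le_mul
            · exact Finset.prod_le_prod (fun n _ => (h01 _).1) hle
            · exact (h01 _).2
            · exact (h01 _).1
            · exact Finset.prod_nonneg fun n _ => (h01 _).1
        _ = _ := mul_one _
  exact ⟨antitone_nat_of_succ_le hstep, hmem⟩
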